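/- Let Δ, Δ' ∈ F⊗F be symmetric weak Frobenius elements. In F^{⊗3} (tensor over 𝕜), writing Δ_{pq} for the image of Δ under the 𝕜-linear embedding F⊗F → F^{⊗3} that places the two tensor legs in positions p and q and 1 in the remaining position, the following six products are all equal: Δ_{12}·Δ'_{13} = Δ'_{23}·Δ_{12} = Δ_{13}·Δ'_{23} = Δ'_{12}·Δ_{13} = Δ_{23}·Δ'_{12} = Δ'_{13}·Δ_{23}. -/

import Mathlib

open scoped TensorProduct

variable (k F : Type*)

/-- Weak Frobenius elements of `F ⊗ F`: `(a⊗b)·Δ = Δ·(b⊗a)` for all `a, b ∈ F`. -/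
def IsWeakFrobenius [CommSemiring k] [Ring F] [Algebra k F] (Δ : F ⊗[k] F) : Prop :=
  ∀ a b : F, (a ⊗ₜ[k] b) * Δ = Δ * (b ⊗ₜ[k] a)

/-- Symmetric elements of `F ⊗ F`: fixed by the flip. -/
def IsSymmEl [CommSemiring k] [Ring F] [Algebra k F] (Δ : F ⊗[k] F) : Prop :=
  (Algebra.TensorProduct.comm k F F) Δ = Δ

/-- The embedding `F⊗F → F⊗F⊗F` placing the two legs in positions 1, 2. -/
noncomputable def emb12 [CommSemiring k] [Ring F] [Algebra k F] :
    F ⊗[k] F →ₗ[k] F ⊗[k] (F ⊗[k] F) :=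
  LinearMap.lTensor F ((TensorProduct.mk k F F).flip 1)

/-- The embedding `F⊗F → F⊗F⊗F` placing the two legs in positions 1, 3. -/
noncomputable def emb13 [CommSemiring k] [Ring F] [Algebra k F] :
    F ⊗[k] F →ₗ[k] F ⊗[k] (F ⊗[k] F) :=
  LinearMap.lTensor F (TensorProduct.mk k F F 1)

/-- The embedding `F⊗F → F⊗F⊗F` placing the two legs in positions 2, 3. -/
noncomputable def emb23 [CommSemiring k] [Ring F] [Algebra k F] :
    F ⊗[k] F →ₗ[k] F ⊗[k] (F ⊗[k] F) :=
  TensorProduct.mk k F (F ⊗[k] F) 1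

/-!
The weak Frobenius identities `(1 ⊗ u) Δ = Δ (u ⊗ 1)` and `(u ⊗ 1) Δ = Δ (1 ⊗ u)` let a factor
cross `Δ` from one leg to the other. Writing `t ∈ F ⊗ F` as a sum of `u ⊗ v` and using that
factors on disjoint legs commute, this gives `Δ₁₂ t₁₃ = t₂₃ Δ₁₂`, `Δ₂₃ t₁₂ = t₁₃ Δ₂₃` and
`(flip t)₁₂ Δ₁₃ = Δ₁₃ t₂₃` for every `t`. Each consecutive equality among the six products is
one of these moves; for `Δ₁₃ Δ'₂₃ = Δ'₁₂ Δ₁₃` it is the last one, with `flip Δ' = Δ'`.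
-/

open Algebra.TensorProduct (includeLeft includeRight tmul_mul_tmul)

section

variable {k F} [CommSemiring k] [Ring F] [Algebra k F]

theorem LinearMap.commute_of_forall_tmul {M N A : Type*} [AddCommMonoid M] [AddCommMonoid N]
    [Module k M] [Module k N] [Semiring A] [Module k A] (f : M ⊗[k] N →ₗ[k] A) (a : A)
    (h : ∀ m n, Commute (f (m ⊗ₜ n)) a) (w : M ⊗[k] N) : Commute (f w) a := by
  induction w using TensorProduct.induction_on with
  | zero => simp
  | tmul m n => exact h m n
  | add w₁ w₂ h₁ h₂ => simpa only [map_add] using h₁.add_left h₂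

theorem emb12_tmul (x y : F) : emb12 k F (x ⊗ₜ y) = x ⊗ₜ (y ⊗ₜ 1) := rfl

theorem emb13_tmul (x y : F) : emb13 k F (x ⊗ₜ y) = x ⊗ₜ (1 ⊗ₜ y) := rfl

theorem emb23_apply (w : F ⊗[k] F) : emb23 k F w = 1 ⊗ₜ w := rfl

theorem emb12_eq_map :
    ⇑(emb12 k F) = Algebra.TensorProduct.map (AlgHom.id k F) (includeLeft : F →ₐ[k] F ⊗[k] F) :=
  congrArg DFunLike.coe (TensorProduct.ext' fun _ _ => rfl :
    emb12 k F = (Algebra.TensorProduct.map (AlgHom.id k F) includeLeft).toLinearMap)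

theorem emb13_eq_map :
    ⇑(emb13 k F) = Algebra.TensorProduct.map (AlgHom.id k F) (includeRight : F →ₐ[k] F ⊗[k] F) :=
  congrArg DFunLike.coe (TensorProduct.ext' fun _ _ => rfl :
    emb13 k F = (Algebra.TensorProduct.map (AlgHom.id k F) includeRight).toLinearMap)

theorem emb12_mul (w₁ w₂ : F ⊗[k] F) : emb12 k F (w₁ * w₂) = emb12 k F w₁ * emb12 k F w₂ := by
  simp only [emb12_eq_map, map_mul]

theorem emb13_mul (w₁ w₂ : F ⊗[k] F) : emb13 k F (w₁ * w₂) = emb13 k F w₁ * emb13 k F w₂ := by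
  simp only [emb13_eq_map, map_mul]

theorem emb23_mul (w₁ w₂ : F ⊗[k] F) : emb23 k F (w₁ * w₂) = emb23 k F w₁ * emb23 k F w₂ := by
  simp only [emb23_apply, tmul_mul_tmul, one_mul]

theorem commute_emb12_one_tmul_one_tmul (w : F ⊗[k] F) (v : F) :
    Commute (emb12 k F w) (1 ⊗ₜ (1 ⊗ₜ v)) :=
  (emb12 k F).commute_of_forall_tmul _ (fun _ _ => by
    simp [emb12_tmul, Commute, SemiconjBy, tmul_mul_tmul]) w

theorem commute_emb13_one_tmul_tmul_one (w : F ⊗[k] F) (v : F) :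
    Commute (emb13 k F w) (1 ⊗ₜ (v ⊗ₜ 1)) :=
  (emb13 k F).commute_of_forall_tmul _ (fun _ _ => by
    simp [emb13_tmul, Commute, SemiconjBy, tmul_mul_tmul]) w

theorem commute_emb23_tmul_one_tmul_one (w : F ⊗[k] F) (v : F) :
    Commute (emb23 k F w) (v ⊗ₜ (1 ⊗ₜ 1)) := by
  simp [emb23_apply, Commute, SemiconjBy, tmul_mul_tmul, ← Algebra.TensorProduct.one_def]

namespace IsWeakFrobenius

theorem emb12_mul_emb13 {Δ : F ⊗[k] F} (hΔ : IsWeakFrobenius k F Δ) (t : F ⊗[k] F) :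
    emb12 k F Δ * emb13 k F t = emb23 k F t * emb12 k F Δ := by
  refine LinearMap.congr_fun (f := (LinearMap.mulLeft k (emb12 k F Δ)) ∘ₗ emb13 k F)
    (g := (LinearMap.mulRight k (emb12 k F Δ)) ∘ₗ emb23 k F) (TensorProduct.ext' fun u v => ?_) t
  have hu : (1 : F) ⊗ₜ (u ⊗ₜ 1) * emb12 k F Δ = emb12 k F Δ * u ⊗ₜ[k] (1 ⊗ₜ[k] 1) := by
    have h := congrArg (emb12 k F) (hΔ 1 u)
    rwa [emb12_mul, emb12_mul] at h
  calc emb12 k F Δ * emb13 k F (u ⊗ₜ v)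
      = emb12 k F Δ * u ⊗ₜ (1 ⊗ₜ 1) * 1 ⊗ₜ (1 ⊗ₜ v) := by
        simp only [emb13_tmul, mul_assoc, tmul_mul_tmul, mul_one, one_mul]
    _ = 1 ⊗ₜ (u ⊗ₜ 1) * (emb12 k F Δ * 1 ⊗ₜ (1 ⊗ₜ v)) := by rw [← hu, mul_assoc]
    _ = emb23 k F (u ⊗ₜ v) * emb12 k F Δ := by
        rw [(commute_emb12_one_tmul_one_tmul Δ v).eq, ← mul_assoc]
        simp only [emb23_apply, tmul_mul_tmul, mul_one, one_mul]

theorem emb23_mul_emb12 {Δ : F ⊗[k] F} (hΔ : IsWeakFrobenius k F Δ) (t : F ⊗[k] F) :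
    emb23 k F Δ * emb12 k F t = emb13 k F t * emb23 k F Δ := by
  refine LinearMap.congr_fun (f := (LinearMap.mulLeft k (emb23 k F Δ)) ∘ₗ emb12 k F)
    (g := (LinearMap.mulRight k (emb23 k F Δ)) ∘ₗ emb13 k F) (TensorProduct.ext' fun x y => ?_) t
  have hy : (1 : F) ⊗ₜ (1 ⊗ₜ y) * emb23 k F Δ = emb23 k F Δ * 1 ⊗ₜ[k] (y ⊗ₜ[k] 1) := by
    have h := congrArg (emb23 k F) (hΔ 1 y)
    rwa [emb23_mul, emb23_mul] at h
  calc emb23 k F Δ * emb12 k F (x ⊗ₜ y)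
      = emb23 k F Δ * x ⊗ₜ (1 ⊗ₜ 1) * 1 ⊗ₜ (y ⊗ₜ 1) := by
        simp only [emb12_tmul, mul_assoc, tmul_mul_tmul, mul_one, one_mul]
    _ = x ⊗ₜ (1 ⊗ₜ 1) * (emb23 k F Δ * 1 ⊗ₜ (y ⊗ₜ 1)) := by
        rw [(commute_emb23_tmul_one_tmul_one Δ x).eq, mul_assoc]
    _ = emb13 k F (x ⊗ₜ y) * emb23 k F Δ := by
        rw [← hy, ← mul_assoc]
        simp only [emb13_tmul, tmul_mul_tmul, mul_one, one_mul]

theorem emb12_comm_mul_emb13 {Δ : F ⊗[k] F} (hΔ : IsWeakFrobenius k F Δ) (t : F ⊗[k] F) :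
    emb12 k F (Algebra.TensorProduct.comm k F F t) * emb13 k F Δ = emb13 k F Δ * emb23 k F t := by
  refine LinearMap.congr_fun
    (f := (LinearMap.mulRight k (emb13 k F Δ)) ∘ₗ emb12 k F ∘ₗ (Algebra.TensorProduct.comm k F F))
    (g := (LinearMap.mulLeft k (emb13 k F Δ)) ∘ₗ emb23 k F) (TensorProduct.ext' fun u v => ?_) t
  have hv : v ⊗ₜ (1 ⊗ₜ 1) * emb13 k F Δ = emb13 k F Δ * (1 : F) ⊗ₜ[k] (1 ⊗ₜ[k] v) := by
    have h := congrArg (emb13 k F) (hΔ v 1)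
    rwa [emb13_mul, emb13_mul] at h
  calc emb12 k F (Algebra.TensorProduct.comm k F F (u ⊗ₜ v)) * emb13 k F Δ
      = 1 ⊗ₜ (u ⊗ₜ 1) * (v ⊗ₜ (1 ⊗ₜ 1) * emb13 k F Δ) := by
        simp only [Algebra.TensorProduct.comm_tmul, emb12_tmul, ← mul_assoc, tmul_mul_tmul,
          mul_one, one_mul]
    _ = emb13 k F Δ * (1 ⊗ₜ (u ⊗ₜ 1) * 1 ⊗ₜ (1 ⊗ₜ v)) := by
        rw [hv, ← mul_assoc, ← (commute_emb13_one_tmul_tmul_one Δ u).eq, mul_assoc]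
    _ = emb13 k F Δ * emb23 k F (u ⊗ₜ v) := by
        simp only [emb23_apply, tmul_mul_tmul, mul_one, one_mul]

end IsWeakFrobenius

end

theorem stmt11 [Field k] [Ring F] [Algebra k F]
    (Δ Δ' : F ⊗[k] F)
    (hΔwf : IsWeakFrobenius k F Δ)
    (hΔ'wf : IsWeakFrobenius k F Δ') (hΔ'sym : IsSymmEl k F Δ') :
    emb12 k F Δ * emb13 k F Δ' = emb23 k F Δ' * emb12 k F Δ ∧
    emb12 k F Δ * emb13 k F Δ' = emb13 k F Δ * emb23 k F Δ' ∧
    emb12 k F Δ * emb13 k F Δ' = emb12 k F Δ' * emb13 k F Δ ∧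
    emb12 k F Δ * emb13 k F Δ' = emb23 k F Δ * emb12 k F Δ' ∧
    emb12 k F Δ * emb13 k F Δ' = emb13 k F Δ' * emb23 k F Δ := by
  have h₁ := hΔwf.emb12_mul_emb13 Δ'
  have h₂ := hΔ'wf.emb23_mul_emb12 Δ
  have h₃ : emb13 k F Δ * emb23 k F Δ' = emb12 k F Δ' * emb13 k F Δ := by
    rw [← hΔwf.emb12_comm_mul_emb13 Δ', hΔ'sym]
  have h₄ := hΔ'wf.emb12_mul_emb13 Δ
  have h₅ := hΔwf.emb23_mul_emb12 Δ'
  have h₁₃ := (h₁.trans h₂).trans h₃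
  exact ⟨h₁, h₁.trans h₂, h₁₃, h₁₃.trans h₄, (h₁₃.trans h₄).trans h₅⟩
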